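/- Let (F_n) be a semiring family of graphs and let G and H be finite simple graphs. Then the asymptotic F-number is subadditive under joins: η_F^asymp(G + H) ≤ η_F^asymp(G) + η_F^asymp(H). -/

import Mathlib

open SimpleGraph

universe u v

/-- The join `G + H` of two simple graphs. -/
def graphJoin {α : Type u} {β : Type v} (G : SimpleGraph α) (H : SimpleGraph β) :
    SimpleGraph (α ⊕ β) where
  Adj x y :=
    match x, y with
    | Sum.inl a, Sum.inl a' => G.Adj a a'
    | Sum.inr b, Sum.inr b' => H.Adj b b'
    | Sum.inl _, Sum.inr _ => True
    | Sum.inr _, Sum.inl _ => True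
  symm := by
    refine ⟨?_⟩
    rintro (a | b) (a' | b') h
    · exact G.adj_symm h
    · trivial
    · trivial
    · exact H.adj_symm h
  loopless := by
    refine ⟨?_⟩
    rintro (a | b) h
    · exact G.loopless.irrefl a h
    · exact H.loopless.irrefl b h

/-- The disjunctive product `G * H`. -/
def disjProd {α : Type u} {β : Type v} (G : SimpleGraph α) (H : SimpleGraph β) :
    SimpleGraph (α × β) where
  Adj p q := G.Adj p.1 q.1 ∨ H.Adj p.2 q.2
  symm := ⟨fun p q h => h.imp (fun h' => G.adj_symm h') (fun h' => H.adj_symm h')⟩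
  loopless := ⟨fun p h => h.elim (fun h' => G.loopless.irrefl p.1 h') (fun h' => H.loopless.irrefl p.2 h')⟩

/-- The lexicographic product `G ⋉ H`. -/
def lexProd {α : Type u} {β : Type v} (G : SimpleGraph α) (H : SimpleGraph β) :
    SimpleGraph (α × β) where
  Adj p q := G.Adj p.1 q.1 ∨ (p.1 = q.1 ∧ H.Adj p.2 q.2)
  symm := ⟨fun p q h => h.imp (fun h' => G.adj_symm h') (fun h' => ⟨h'.1.symm, H.adj_symm h'.2⟩)⟩
  loopless := ⟨fun p h => h.elim (fun h' => G.loopless.irrefl p.1 h') (fun h' => H.loopless.irrefl p.2 h'.2)⟩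

/-- The `d`-fold blowup `G ⋉ d`, i.e. the lexicographic product `G ⋉ K_d`. -/
def blowup {α : Type u} (G : SimpleGraph α) (d : ℕ) : SimpleGraph (α × Fin d) :=
  lexProd G (⊤ : SimpleGraph (Fin d))

/-- The `d`-fractionalization `G/d`: the graph of `d`-cliques of `G`, with two
`d`-cliques adjacent iff they are disjoint and pairwise adjacent. -/
def fracGraph {α : Type u} (G : SimpleGraph α) (d : ℕ) :
    SimpleGraph {S : Finset α // S.card = d ∧ G.IsClique (S : Set α)} where
  Adj S T := S ≠ T ∧ Disjoint S.val T.val ∧ ∀ a ∈ S.val, ∀ b ∈ T.val, G.Adj a b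
  symm := by
    refine ⟨?_⟩
    rintro S T ⟨hne, hd, hadj⟩
    exact ⟨hne.symm, hd.symm, fun b hb a ha => (hadj a ha b hb).symm⟩
  loopless := ⟨fun S h => h.1 rfl⟩

/-- The `n`-fold disjunctive power `G^{*n}`. -/
def disjPow {α : Type u} (G : SimpleGraph α) (n : ℕ) :
    SimpleGraph (Fin n → α) where
  Adj f g := ∃ i, G.Adj (f i) (g i)
  symm := ⟨fun f g ⟨i, h⟩ => ⟨i, h.symm⟩⟩
  loopless := ⟨fun f ⟨i, h⟩ => G.loopless.irrefl _ h⟩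

/-- A semiring family of graphs. -/
structure SemiringFamily where
  V : ℕ → Type u
  F : ∀ n, SimpleGraph (V n)
  isEmpty_zero : IsEmpty (V 0)
  nonempty_one : Nonempty (V 1)
  add_hom : ∀ n m : ℕ, Nonempty (graphJoin (F n) (F m) →g F (n + m))
  mul_hom : ∀ n m : ℕ, Nonempty (disjProd (F n) (F m) →g F (n * m))

/-- The `F`-number: the least `n` such that `G → F_n`. -/
noncomputable def etaF (F : SemiringFamily.{u}) {α : Type v} (G : SimpleGraph α) : ℕ :=
  sInf {n : ℕ | Nonempty (G →g F.F n)}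

/-- The fractional `F`-number. -/
noncomputable def etaFrac (F : SemiringFamily.{u}) {α : Type v} (G : SimpleGraph α) : ℝ :=
  sInf {x : ℝ | ∃ n d : ℕ, 1 ≤ d ∧ Nonempty (G →g fracGraph (F.F n) d) ∧ x = (n : ℝ) / d}

/-- The asymptotic `F`-number. -/
noncomputable def etaAsymp (F : SemiringFamily.{u}) {α : Type v} (G : SimpleGraph α) : ℝ :=
  sInf {x : ℝ | ∃ n : ℕ, 1 ≤ n ∧ x = (etaF F (disjPow G n) : ℝ) ^ ((1 : ℝ) / n)}

/-- The orthogonal complement of a set of vertices. -/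
def perp {α : Type u} (G : SimpleGraph α) (S : Set α) : Set α :=
  {v | ∀ s ∈ S, G.Adj v s}

/-- A flat is a set of vertices with `S^{⊥⊥} = S`. -/
def IsFlat {α : Type u} (G : SimpleGraph α) (S : Set α) : Prop :=
  perp G (perp G S) = S

/-- Homomorphic equivalence of two graphs. -/
def HomEquiv {α : Type u} {β : Type v} (G : SimpleGraph α) (H : SimpleGraph β) : Prop :=
  Nonempty (G →g H) ∧ Nonempty (H →g G)

/-- A linear-like semiring family: every flat of `F_n` induces a subgraph with some
clique number `k`, homomorphically equivalent to `F_k`. -/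
structure LinearLikeFamily extends SemiringFamily where
  linearLike : ∀ n (S : Set (V n)), IsFlat (F n) S →
    ∃ k : ℕ, (∃ s : Finset S, ((F n).induce S).IsNClique k s) ∧
      (∀ s : Finset S, ¬ ((F n).induce S).IsNClique (k + 1) s) ∧
      HomEquiv ((F n).induce S) (F k)

/-!
Peeling off the first coordinate of the `(G + H)`-factor maps
`G^{*j} * H^{*k} * (G + H)^{*(N+1)}` into the join of `G^{*(j+1)} * H^{*k} * (G + H)^{*N}` and
`G^{*j} * H^{*(k+1)} * (G + H)^{*N}`, according to the side of the join that coordinate lies on.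
As `η_F` is subadditive on joins and submultiplicative on disjunctive products, and
`η_F(G^{*i}) ≤ M x^i` for `x = η_F(G^{*n})^{1/n}` and `M = ∑_{r<n} η_F(G^{*r})`, induction on `N`
gives `η_F((G + H)^{*N}) ≤ C (x + y)^N`. Taking `N`-th roots and letting `N → ∞` yields
`η_F^asymp(G + H) ≤ x + y` for all `n, m ≥ 1`.
-/

open Finset Filter Topology

section Homs

variable {γ δ γ' δ' : Type*}

@[simp] lemma graphJoin_adj_inl_inl {A : SimpleGraph γ} {B : SimpleGraph δ} {a a' : γ} :
    (graphJoin A B).Adj (.inl a) (.inl a') ↔ A.Adj a a' := Iff.rfl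

@[simp] lemma graphJoin_adj_inr_inr {A : SimpleGraph γ} {B : SimpleGraph δ} {b b' : δ} :
    (graphJoin A B).Adj (.inr b) (.inr b') ↔ B.Adj b b' := Iff.rfl

@[simp] lemma graphJoin_adj_inl_inr {A : SimpleGraph γ} {B : SimpleGraph δ} {a : γ}
    {b : δ} : (graphJoin A B).Adj (.inl a) (.inr b) := trivial

@[simp] lemma graphJoin_adj_inr_inl {A : SimpleGraph γ} {B : SimpleGraph δ} {a : γ}
    {b : δ} : (graphJoin A B).Adj (.inr b) (.inl a) := trivial

@[simp] lemma disjProd_adj {A : SimpleGraph γ} {B : SimpleGraph δ} {p q : γ × δ} :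
    (disjProd A B).Adj p q ↔ A.Adj p.1 q.1 ∨ B.Adj p.2 q.2 := Iff.rfl

lemma disjPow_adj {K : SimpleGraph γ} {n : ℕ} {f g : Fin n → γ} :
    (disjPow K n).Adj f g ↔ ∃ i, K.Adj (f i) (g i) := Iff.rfl

@[simp] lemma disjPow_adj_cons {K : SimpleGraph γ} {n : ℕ} {a b : γ} {f g : Fin n → γ} :
    (disjPow K (n + 1)).Adj (Fin.cons a f) (Fin.cons b g) ↔
      K.Adj a b ∨ (disjPow K n).Adj f g := by
  simp [disjPow_adj, Fin.exists_fin_succ]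

def Hom.graphJoinMap {A : SimpleGraph γ} {B : SimpleGraph δ} {A' : SimpleGraph γ'}
    {B' : SimpleGraph δ'} (φ : A →g A') (ψ : B →g B') :
    graphJoin A B →g graphJoin A' B' where
  toFun := Sum.map φ ψ
  map_rel' := by
    rintro (a | b) (a' | b') h
    · exact φ.map_rel h
    · trivial
    · trivial
    · exact ψ.map_rel h

def Hom.disjProdMap {A : SimpleGraph γ} {B : SimpleGraph δ} {A' : SimpleGraph γ'}
    {B' : SimpleGraph δ'} (φ : A →g A') (ψ : B →g B') :
    disjProd A B →g disjProd A' B' where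
  toFun := Prod.map φ ψ
  map_rel' h := h.imp φ.map_rel ψ.map_rel

def completeGraphSumHom :
    completeGraph (γ ⊕ δ) →g graphJoin (completeGraph γ) (completeGraph δ) where
  toFun := id
  map_rel' := by
    rintro (a | b) (a' | b') h <;> simp_all

def disjPowAddHom (K : SimpleGraph γ) (c d : ℕ) :
    disjPow K (c + d) →g disjProd (disjPow K c) (disjPow K d) where
  toFun f := (fun i => f (Fin.castAdd d i), fun i => f (Fin.natAdd c i))
  map_rel' := by
    rintro f g ⟨i, hi⟩
    induction i using Fin.addCases with
    | left i => exact .inl ⟨i, hi⟩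
    | right i => exact .inr ⟨i, hi⟩

end Homs

section EtaF

variable (F : SemiringFamily.{u}) {γ δ : Type*}

lemma SemiringFamily.nonempty_completeGraph_hom (m : ℕ) :
    Nonempty (completeGraph (Fin m) →g F.F m) := by
  induction m with
  | zero => exact ⟨⟨Fin.elim0, fun {i} => i.elim0⟩⟩
  | succ m ih =>
    obtain ⟨φ⟩ := ih
    obtain ⟨v⟩ := F.nonempty_one
    obtain ⟨μ⟩ := F.add_hom m 1
    let ψ : completeGraph (Fin 1) →g F.F 1 :=
      ⟨fun _ => v, fun {i j} h => absurd (Subsingleton.elim i j) h⟩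
    exact ⟨μ.comp <| (Hom.graphJoinMap φ ψ).comp <|
      completeGraphSumHom.comp (Iso.completeGraph finSumFinEquiv.symm).toHom⟩

lemma nonempty_hom_etaF [Fintype γ] (K : SimpleGraph γ) : Nonempty (K →g F.F (etaF F K)) := by
  obtain ⟨φ⟩ := F.nonempty_completeGraph_hom (Fintype.card γ)
  exact Nat.sInf_mem (s := {n | Nonempty (K →g F.F n)})
    ⟨_, ⟨φ.comp <| (Iso.completeGraph (Fintype.equivFin γ)).toHom.comp (Hom.ofLE le_top)⟩⟩

lemma etaF_le {K : SimpleGraph γ} {n : ℕ} (φ : K →g F.F n) : etaF F K ≤ n :=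
  Nat.sInf_le ⟨φ⟩

lemma etaF_le_of_hom [Fintype δ] {K : SimpleGraph γ} {K' : SimpleGraph δ} (φ : K →g K') :
    etaF F K ≤ etaF F K' :=
  let ⟨ψ⟩ := nonempty_hom_etaF F K'
  etaF_le F (ψ.comp φ)

lemma etaF_eq_zero [IsEmpty γ] (K : SimpleGraph γ) : etaF F K = 0 :=
  Nat.le_zero.mp (etaF_le F ⟨isEmptyElim, fun {a} => isEmptyElim a⟩)

lemma one_le_etaF [Fintype γ] [Nonempty γ] (K : SimpleGraph γ) : 1 ≤ etaF F K := by
  refine Nat.one_le_iff_ne_zero.mpr fun h => ?_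
  obtain ⟨φ⟩ := nonempty_hom_etaF F K
  rw [h] at φ
  exact F.isEmpty_zero.false (φ (Classical.arbitrary γ))

lemma etaF_graphJoin_le [Fintype γ] [Fintype δ] (A : SimpleGraph γ) (B : SimpleGraph δ) :
    etaF F (graphJoin A B) ≤ etaF F A + etaF F B :=
  let ⟨φ⟩ := nonempty_hom_etaF F A
  let ⟨ψ⟩ := nonempty_hom_etaF F B
  let ⟨μ⟩ := F.add_hom (etaF F A) (etaF F B)
  etaF_le F (μ.comp (Hom.graphJoinMap φ ψ))

lemma etaF_disjProd_le [Fintype γ] [Fintype δ] (A : SimpleGraph γ) (B : SimpleGraph δ) :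
    etaF F (disjProd A B) ≤ etaF F A * etaF F B :=
  let ⟨φ⟩ := nonempty_hom_etaF F A
  let ⟨ψ⟩ := nonempty_hom_etaF F B
  let ⟨μ⟩ := F.mul_hom (etaF F A) (etaF F B)
  etaF_le F (μ.comp (Hom.disjProdMap φ ψ))

lemma etaF_disjPow_add_le [Fintype γ] (K : SimpleGraph γ) (c d : ℕ) :
    etaF F (disjPow K (c + d)) ≤ etaF F (disjPow K c) * etaF F (disjPow K d) :=
  (etaF_le_of_hom F (disjPowAddHom K c d)).trans (etaF_disjProd_le F _ _)

end EtaF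

lemma le_pow_mul_of_submultiplicative {a : ℕ → ℕ} (ha : ∀ c d, a (c + d) ≤ a c * a d)
    (n q r : ℕ) : a (q * n + r) ≤ a n ^ q * a r := by
  induction q with
  | zero => simp
  | succ q ih =>
    calc a ((q + 1) * n + r) = a (n + (q * n + r)) := by ring_nf
      _ ≤ a n * (a n ^ q * a r) := (ha _ _).trans (Nat.mul_le_mul_left _ ih)
      _ = a n ^ (q + 1) * a r := by ring

lemma le_sum_mul_rpow_pow_of_submultiplicative {a : ℕ → ℕ}
    (ha : ∀ c d, a (c + d) ≤ a c * a d) {n : ℕ} (hn : 0 < n) (h1 : 1 ≤ a n) (i : ℕ) :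
    (a i : ℝ) ≤ (∑ r ∈ range n, (a r : ℝ)) * ((a n : ℝ) ^ ((1 : ℝ) / n)) ^ i := by
  have hsplit : a i ≤ a n ^ (i / n) * a (i % n) := by
    simpa only [Nat.div_add_mod'] using le_pow_mul_of_submultiplicative ha n (i / n) (i % n)
  have hq : (a n : ℝ) ^ (i / n) ≤ ((a n : ℝ) ^ ((1 : ℝ) / n)) ^ i := by
    rw [← Real.rpow_natCast, ← Real.rpow_natCast _ i, ← Real.rpow_mul (Nat.cast_nonneg _)]
    refine Real.rpow_le_rpow_of_exponent_le (by exact_mod_cast h1) ?_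
    calc ((i / n : ℕ) : ℝ) ≤ i / n := Nat.cast_div_le
      _ = 1 / n * i := by ring
  have hr : (a (i % n) : ℝ) ≤ ∑ r ∈ range n, (a r : ℝ) :=
    single_le_sum (fun r _ => Nat.cast_nonneg (a r)) (mem_range.mpr (Nat.mod_lt i hn))
  calc (a i : ℝ) ≤ (a n : ℝ) ^ (i / n) * a (i % n) := by exact_mod_cast hsplit
    _ ≤ ((a n : ℝ) ^ ((1 : ℝ) / n)) ^ i * ∑ r ∈ range n, (a r : ℝ) :=
      mul_le_mul hq hr (Nat.cast_nonneg _) (by positivity)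
    _ = _ := mul_comm _ _

lemma etaF_disjPow_le (F : SemiringFamily.{u}) {γ : Type*} [Fintype γ] (G : SimpleGraph γ)
    {n : ℕ} (hn : 0 < n) (i : ℕ) :
    (etaF F (disjPow G i) : ℝ) ≤ (∑ r ∈ range n, (etaF F (disjPow G r) : ℝ)) *
      ((etaF F (disjPow G n) : ℝ) ^ ((1 : ℝ) / n)) ^ i := by
  rcases isEmpty_or_nonempty γ with hγ | hγ
  · rcases i with _ | i
    · simpa using single_le_sum (f := fun r => (etaF F (disjPow G r) : ℝ))
        (fun r _ => Nat.cast_nonneg _) (mem_range.mpr hn)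
    · rw [etaF_eq_zero, Nat.cast_zero]
      positivity
  · exact le_sum_mul_rpow_pow_of_submultiplicative (a := fun r => etaF F (disjPow G r))
      (etaF_disjPow_add_le F G) hn (one_le_etaF F _) i

section MixedPow

variable {γ δ : Type*} (G : SimpleGraph γ) (H : SimpleGraph δ)

def mixedPow (j k N : ℕ) :
    SimpleGraph (((Fin j → γ) × (Fin k → δ)) × (Fin N → γ ⊕ δ)) :=
  disjProd (disjProd (disjPow G j) (disjPow H k)) (disjPow (graphJoin G H) N)

def mixedPowSuccHom (j k N : ℕ) :
    mixedPow G H j k (N + 1) →g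
      graphJoin (mixedPow G H (j + 1) k N) (mixedPow G H j (k + 1) N) where
  toFun p := Sum.elim (fun a => .inl ((Fin.cons a p.1.1, p.1.2), Fin.tail p.2))
    (fun b => .inr ((p.1.1, Fin.cons b p.1.2), Fin.tail p.2)) (p.2 0)
  map_rel' := by
    rintro ⟨u, w⟩ ⟨u', w'⟩ h
    induction w using Fin.consCases with | cons c t => ?_
    induction w' using Fin.consCases with | cons c' t' => ?_
    rcases c with a | b <;> rcases c' with a' | b' <;>
      simp_all [mixedPow, or_assoc, or_left_comm]

def mixedPowZeroHom (j k : ℕ) : mixedPow G H j k 0 →g disjProd (disjPow G j) (disjPow H k) where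
  toFun := Prod.fst
  map_rel' := by
    rintro _ _ (h | ⟨i, -⟩)
    · exact h
    · exact i.elim0

def disjPowToMixedPow (N : ℕ) : disjPow (graphJoin G H) N →g mixedPow G H 0 0 N where
  toFun w := ((Fin.elim0, Fin.elim0), w)
  map_rel' h := .inr h

end MixedPow

lemma le_mul_pow_mul_pow_mul_add_pow {f : ℕ → ℕ → ℕ → ℝ} {C x y : ℝ}
    (h0 : ∀ j k, f j k 0 ≤ C * x ^ j * y ^ k)
    (hsucc : ∀ j k N, f j k (N + 1) ≤ f (j + 1) k N + f j (k + 1) N) (N j k : ℕ) :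
    f j k N ≤ C * x ^ j * y ^ k * (x + y) ^ N := by
  induction N generalizing j k with
  | zero => simpa using h0 j k
  | succ N ih =>
    calc f j k (N + 1) ≤ f (j + 1) k N + f j (k + 1) N := hsucc j k N
      _ ≤ C * x ^ (j + 1) * y ^ k * (x + y) ^ N + C * x ^ j * y ^ (k + 1) * (x + y) ^ N :=
        add_le_add (ih _ _) (ih _ _)
      _ = C * x ^ j * y ^ k * (x + y) ^ (N + 1) := by ring

section Join

variable (F : SemiringFamily.{u}) {γ δ : Type*} [Fintype γ] [Fintype δ]

lemma one_le_sum_etaF_disjPow (G : SimpleGraph γ) {n : ℕ} (hn : 0 < n) :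
    1 ≤ ∑ r ∈ range n, (etaF F (disjPow G r) : ℝ) :=
  calc (1 : ℝ) ≤ etaF F (disjPow G 0) := by exact_mod_cast one_le_etaF F _
    _ ≤ _ := single_le_sum (f := fun r => (etaF F (disjPow G r) : ℝ))
      (fun r _ => Nat.cast_nonneg _) (mem_range.mpr hn)

lemma exists_etaF_disjPow_graphJoin_le (G : SimpleGraph γ) (H : SimpleGraph δ) {n m : ℕ}
    (hn : 0 < n) (hm : 0 < m) : ∃ C > 0, ∀ N, (etaF F (disjPow (graphJoin G H) N) : ℝ) ≤
      C * ((etaF F (disjPow G n) : ℝ) ^ ((1 : ℝ) / n) +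
        (etaF F (disjPow H m) : ℝ) ^ ((1 : ℝ) / m)) ^ N := by
  set x := (etaF F (disjPow G n) : ℝ) ^ ((1 : ℝ) / n)
  set y := (etaF F (disjPow H m) : ℝ) ^ ((1 : ℝ) / m)
  set MG := ∑ r ∈ range n, (etaF F (disjPow G r) : ℝ)
  set MH := ∑ r ∈ range m, (etaF F (disjPow H r) : ℝ)
  have h0 (j k : ℕ) : (etaF F (mixedPow G H j k 0) : ℝ) ≤ MG * MH * x ^ j * y ^ k :=
    calc (etaF F (mixedPow G H j k 0) : ℝ)
        ≤ (etaF F (disjPow G j) : ℝ) * etaF F (disjPow H k) := by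
          exact_mod_cast (etaF_le_of_hom F (mixedPowZeroHom G H j k)).trans
            (etaF_disjProd_le F _ _)
      _ ≤ (MG * x ^ j) * (MH * y ^ k) :=
          mul_le_mul (etaF_disjPow_le F G hn j) (etaF_disjPow_le F H hm k)
            (Nat.cast_nonneg _) (by positivity)
      _ = MG * MH * x ^ j * y ^ k := by ring
  have hsucc (j k N : ℕ) : (etaF F (mixedPow G H j k (N + 1)) : ℝ) ≤
      etaF F (mixedPow G H (j + 1) k N) + etaF F (mixedPow G H j (k + 1) N) := by
    exact_mod_cast (etaF_le_of_hom F (mixedPowSuccHom G H j k N)).trans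
      (etaF_graphJoin_le F _ _)
  have hMG : 0 < MG := zero_lt_one.trans_le (one_le_sum_etaF_disjPow F G hn)
  have hMH : 0 < MH := zero_lt_one.trans_le (one_le_sum_etaF_disjPow F H hm)
  refine ⟨MG * MH, mul_pos hMG hMH, fun N => ?_⟩
  calc (etaF F (disjPow (graphJoin G H) N) : ℝ) ≤ etaF F (mixedPow G H 0 0 N) := by
        exact_mod_cast etaF_le_of_hom F (disjPowToMixedPow G H N)
    _ ≤ MG * MH * x ^ 0 * y ^ 0 * (x + y) ^ N :=
        le_mul_pow_mul_pow_mul_add_pow (f := fun j k N => (etaF F (mixedPow G H j k N) : ℝ))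
          h0 hsucc N 0 0
    _ = MG * MH * (x + y) ^ N := by ring

end Join

section Asymptotic

variable (F : SemiringFamily.{u}) {γ δ : Type*}

lemma etaAsymp_eq_iInf (G : SimpleGraph γ) :
    etaAsymp F G =
      ⨅ n : ℕ, (etaF F (disjPow G (n + 1)) : ℝ) ^ ((1 : ℝ) / (n + 1 : ℕ)) := by
  refine congrArg sInf (Set.ext fun x => ⟨?_, ?_⟩)
  · rintro ⟨n, hn, rfl⟩
    obtain ⟨k, rfl⟩ := Nat.exists_eq_add_of_le' hn
    exact ⟨k, rfl⟩
  · rintro ⟨n, rfl⟩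
    exact ⟨n + 1, n.succ_pos, rfl⟩

lemma etaAsymp_le (G : SimpleGraph γ) {N : ℕ} (hN : 0 < N) :
    etaAsymp F G ≤ (etaF F (disjPow G N) : ℝ) ^ ((1 : ℝ) / N) :=
  csInf_le ⟨0, by rintro _ ⟨n, -, rfl⟩; positivity⟩ ⟨N, hN, rfl⟩

lemma etaAsymp_le_of_etaF_le {G : SimpleGraph γ} {C z : ℝ} (hC : 0 < C) (hz : 0 ≤ z)
    (h : ∀ N, (etaF F (disjPow G N) : ℝ) ≤ C * z ^ N) : etaAsymp F G ≤ z := by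
  have hroot {N : ℕ} (hN : 0 < N) : etaAsymp F G ≤ C ^ ((1 : ℝ) / N) * z :=
    calc etaAsymp F G ≤ (etaF F (disjPow G N) : ℝ) ^ ((1 : ℝ) / N) := etaAsymp_le F G hN
      _ ≤ (C * z ^ N) ^ ((1 : ℝ) / N) := by gcongr; exact h N
      _ = C ^ ((1 : ℝ) / N) * z := by
        rw [Real.mul_rpow hC.le (by positivity), ← Real.rpow_natCast,
          ← Real.rpow_mul hz, mul_one_div_cancel (by positivity), Real.rpow_one]
  have hlim : Tendsto (fun N : ℕ => C ^ ((1 : ℝ) / N) * z) atTop (𝓝 z) := by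
    have h := ((Real.continuousAt_const_rpow hC.ne').tendsto.comp
      tendsto_one_div_atTop_nhds_zero_nat).mul_const z
    rwa [Real.rpow_zero, one_mul] at h
  exact ge_of_tendsto hlim (eventually_atTop.mpr ⟨1, fun N hN => hroot hN⟩)

lemma le_etaAsymp_add_etaAsymp {G : SimpleGraph γ} {H : SimpleGraph δ} {e : ℝ}
    (h : ∀ n m : ℕ, 0 < n → 0 < m → e ≤ (etaF F (disjPow G n) : ℝ) ^ ((1 : ℝ) / n) +
      (etaF F (disjPow H m) : ℝ) ^ ((1 : ℝ) / m)) :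
    e ≤ etaAsymp F G + etaAsymp F H := by
  rw [etaAsymp_eq_iInf, etaAsymp_eq_iInf]
  exact le_ciInf_add_ciInf fun n m => h _ _ n.succ_pos m.succ_pos

end Asymptotic

/-- The asymptotic `F`-number is subadditive under joins. -/
theorem etaAsymp_join_subadditive (F : SemiringFamily.{u}) {α : Type v} {β : Type w}
    [Fintype α] [Fintype β] (G : SimpleGraph α) (H : SimpleGraph β) :
    etaAsymp F (graphJoin G H) ≤ etaAsymp F G + etaAsymp F H := by
  refine le_etaAsymp_add_etaAsymp F fun n m hn hm => ?_
  obtain ⟨C, hC, hbound⟩ := exists_etaF_disjPow_graphJoin_le F G H hn hm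
  exact etaAsymp_le_of_etaF_le F hC (by positivity) hbound
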